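/- Fix δ ∈ (0,1), q ≥ 1, and A_min > 0. For a nonnegative integer K, the number of pairs (W, ω) is at most 72^{(1+1/(2δ))·L} · (72^{1+1/(2δ)}·q)^{(2/A_min)·K}, where W ⊆ V(Λ^L) is a vertex subset of an L×L triangular lattice torus (a graph on L² vertices of degree 6) such that W ∪ B is connected for some 'bridge set' B with |B| ≤ |W|/(2δ) + L and W ∪ B contains a fixed vertex v₀, |W| ≤ (2/A_min)·K, and ω : W → [q] is an arbitrary coloring of W. -/

import Mathlib

open scoped Classical

/-!
Every connected set `S ∋ v₀` is the vertex set of a closed walk from `v₀` of length at most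
`2(|S| - 1)`: grow the walk one new vertex at a time by a back-and-forth detour along a boundary
edge. In a 6-regular graph there are `6^ℓ` walks of length `ℓ` from `v₀` (row sums of the powers
of the adjacency matrix), so there are fewer than `36^n` connected sets of size `≤ n` through
`v₀`, and at most `72^n` subsets of them. A bridged `W` lies in the connected set `W ∪ B` of
size at most `L + (1 + 1/(2δ))|W|`, and carries at most `q^|W|` colourings.
-/

open Finset
open scoped Matrix

namespace SimpleGraph

variable {V : Type*} {G : SimpleGraph V}

lemma Walk.exists_detour [DecidableEq V] {a b u y : V} (p : G.Walk a b) (hu : u ∈ p.support)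
    (hy : G.Adj u y) :
    ∃ p' : G.Walk a b, p'.length = p.length + 2 ∧
      p'.support.toFinset = insert y p.support.toFinset := by
  induction p with
  | nil =>
    rw [Walk.support_nil, List.mem_singleton] at hu
    subst hu
    exact ⟨.cons hy (.cons hy.symm .nil), rfl, by ext; simp [or_comm]⟩
  | @cons a c b h q ih =>
    by_cases hua : u = a
    · subst hua
      refine ⟨.cons hy (.cons hy.symm (.cons h q)), by simp, ?_⟩
      ext; simp
    · obtain ⟨q', hlen, hsupp⟩ := ih (by simpa [hua] using hu)
      refine ⟨.cons h q', by simp [hlen], ?_⟩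
      simp only [Walk.support_cons, List.toFinset_cons, hsupp, Finset.insert_comm]

lemma Preconnected.exists_closed_walk_support_eq_univ [Fintype V] [DecidableEq V]
    (hG : G.Preconnected) (v : V) :
    ∃ p : G.Walk v v, p.support.toFinset = univ ∧ p.length + 2 ≤ 2 * Fintype.card V := by
  suffices ∀ p : G.Walk v v, p.length + 2 ≤ 2 * #p.support.toFinset →
      ∃ p : G.Walk v v, p.support.toFinset = univ ∧ p.length + 2 ≤ 2 * Fintype.card V from
    this .nil (by simp)
  intro p hp
  induction hm : #(univ \ p.support.toFinset) generalizing p with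
  | zero =>
    have hsupp : p.support.toFinset = univ := by simpa [sdiff_eq_empty_iff_subset] using hm
    exact ⟨p, hsupp, by rwa [hsupp, card_univ] at hp⟩
  | succ m ih =>
    obtain ⟨x, hx⟩ : (univ \ p.support.toFinset).Nonempty := by
      rw [← card_pos, hm]; omega
    obtain ⟨d, -, hd, hdx⟩ := (hG v x).some.exists_boundary_dart {w | w ∈ p.support}
      p.start_mem_support (by simpa using hx)
    obtain ⟨p', hlen, hsupp⟩ := p.exists_detour hd d.adj
    have hnew : d.snd ∉ p.support.toFinset := by simpa using hdx
    refine ih p' ?_ ?_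
    · rw [hlen, hsupp, card_insert_of_notMem hnew]; omega
    · rw [hsupp, sdiff_insert, card_erase_of_mem (by simpa using hnew), hm]; rfl

lemma exists_closed_walk_support_eq_of_induce_connected [Fintype V] [DecidableEq V]
    {S : Finset V} (hS : (G.induce (S : Set V)).Connected) {v : V} (hv : v ∈ S) :
    ∃ p : G.Walk v v, p.support.toFinset = S ∧ p.length + 2 ≤ 2 * #S := by
  obtain ⟨p, hsupp, hlen⟩ := hS.preconnected.exists_closed_walk_support_eq_univ ⟨v, hv⟩
  let q : G.Walk v v := p.map (Embedding.induce _).toHom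
  have hq : q.support = p.support.map Subtype.val := Walk.support_map _ _
  have hql : q.length = p.length := Walk.length_map _ _
  have hp : ∀ w, w ∈ p.support := fun w ↦ List.mem_toFinset.mp (hsupp ▸ mem_univ w)
  refine ⟨q, ?_, ?_⟩
  · ext w
    simp only [hq, List.mem_toFinset, List.mem_map, Subtype.exists, exists_and_right,
      exists_eq_right]
    exact ⟨fun ⟨hw, _⟩ ↦ hw, fun hw ↦ ⟨hw, hp _⟩⟩
  · simpa [hql] using hlen

lemma card_finsetWalkLength_le [Fintype V] [DecidableEq V] [DecidableRel G.Adj] {d : ℕ}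
    (hG : G.IsRegularOfDegree d) (ℓ : ℕ) (u v : V) : #(G.finsetWalkLength ℓ u v) ≤ d ^ ℓ := by
  have hrow : G.adjMatrix ℕ ^ ℓ *ᵥ Function.const V 1 = Function.const V (d ^ ℓ) := by
    induction ℓ with
    | zero => simp
    | succ ℓ ih =>
      ext w
      rw [pow_succ', ← Matrix.mulVec_mulVec, ih, adjMatrix_mulVec_const_apply_of_regular hG]
      simp [pow_succ']
  calc #(G.finsetWalkLength ℓ u v) = (G.adjMatrix ℕ ^ ℓ) u v := by
        rw [adjMatrix_pow_apply_eq_card_walk, card_set_walk_length_eq, Nat.cast_id]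
    _ ≤ ∑ w, (G.adjMatrix ℕ ^ ℓ) u w := single_le_sum (fun _ _ ↦ Nat.zero_le _) (mem_univ v)
    _ = d ^ ℓ := by simpa [Matrix.mulVec, dotProduct] using congrFun hrow u

lemma card_connected_finsets_le [Fintype V] [DecidableEq V] [DecidableRel G.Adj] {d : ℕ}
    (hG : G.IsRegularOfDegree d) (v : V) (n : ℕ) :
    #{S : Finset V | v ∈ S ∧ (G.induce (S : Set V)).Connected ∧ #S ≤ n} ≤
      ∑ ℓ ∈ range (2 * n), d ^ ℓ := by
  calc _ ≤ #((range (2 * n)).biUnion fun ℓ ↦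
          (G.finsetWalkLength ℓ v v).image fun p ↦ p.support.toFinset) := by
        refine card_le_card fun S hS ↦ ?_
        obtain ⟨hv, hconn, hcard⟩ := (mem_filter.mp hS).2
        obtain ⟨p, hsupp, hlen⟩ := exists_closed_walk_support_eq_of_induce_connected hconn hv
        simp only [mem_biUnion, mem_range, mem_image, mem_finsetWalkLength_iff]
        exact ⟨p.length, by omega, p, rfl, hsupp⟩
    _ ≤ ∑ ℓ ∈ range (2 * n), #(G.finsetWalkLength ℓ v v) :=
        card_biUnion_le.trans (sum_le_sum fun _ _ ↦ card_image_le)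
    _ ≤ ∑ ℓ ∈ range (2 * n), d ^ ℓ := sum_le_sum fun ℓ _ ↦ card_finsetWalkLength_le hG ℓ v v

lemma card_subsets_of_connected_finsets_le [Fintype V] [DecidableEq V] [DecidableRel G.Adj]
    {d : ℕ} (hG : G.IsRegularOfDegree d) (v : V) (n : ℕ) :
    #{W : Finset V | ∃ S, W ⊆ S ∧ v ∈ S ∧ (G.induce (S : Set V)).Connected ∧ #S ≤ n} ≤
      (∑ ℓ ∈ range (2 * n), d ^ ℓ) * 2 ^ n := by
  set 𝒮 := ({S : Finset V | v ∈ S ∧ (G.induce (S : Set V)).Connected ∧ #S ≤ n} : Finset _)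
  calc _ ≤ #(𝒮.biUnion powerset) := by
        refine card_le_card fun W hW ↦ ?_
        obtain ⟨S, hWS, hS⟩ := (mem_filter.mp hW).2
        exact mem_biUnion.mpr ⟨S, by simpa [𝒮] using hS, mem_powerset.mpr hWS⟩
    _ ≤ #𝒮 * 2 ^ n := card_biUnion_le_card_mul _ _ _ fun S hS ↦ by
        rw [card_powerset]
        exact Nat.pow_le_pow_right two_pos (mem_filter.mp hS).2.2.2
    _ ≤ _ := Nat.mul_le_mul_right _ (card_connected_finsets_le hG v n)

lemma card_le_of_forall_subset_connected [Fintype V] [DecidableEq V] [DecidableRel G.Adj]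
    {d : ℕ} (hG : G.IsRegularOfDegree d) (hd : 2 ≤ d) (v : V) {n : ℕ} {P : Finset V → Prop}
    (hP : ∀ W, P W → ∃ S, W ⊆ S ∧ v ∈ S ∧ (G.induce (S : Set V)).Connected ∧ #S ≤ n) :
    Nat.card {W // P W} ≤ (2 * d ^ 2) ^ n := by
  calc Nat.card {W // P W}
      ≤ #{W : Finset V | ∃ S, W ⊆ S ∧ v ∈ S ∧ (G.induce (S : Set V)).Connected ∧ #S ≤ n} := by
        rw [Nat.card_eq_fintype_card, Fintype.card_subtype]
        exact card_le_card fun W hW ↦ mem_filter.mpr ⟨mem_univ W, hP W (mem_filter.mp hW).2⟩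
    _ ≤ (∑ ℓ ∈ range (2 * n), d ^ ℓ) * 2 ^ n := card_subsets_of_connected_finsets_le hG v n
    _ ≤ d ^ (2 * n) * 2 ^ n :=
        Nat.mul_le_mul_right _ (Nat.geomSum_lt hd fun _ ↦ mem_range.mp).le
    _ = (2 * d ^ 2) ^ n := by rw [pow_mul, ← mul_pow, mul_comm]

end SimpleGraph

lemma card_sigma_fun_fin_le {ι α : Type*} [Fintype ι] (s : ι → Finset α) {q w : ℕ}
    (hq : 1 ≤ q) (hs : ∀ i, #(s i) ≤ w) :
    Nat.card (Σ i, (s i → Fin q)) ≤ Nat.card ι * q ^ w := by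
  rw [Nat.card_eq_fintype_card, Fintype.card_sigma, Nat.card_eq_fintype_card, ← smul_eq_mul,
    ← card_univ, ← sum_const]
  refine sum_le_sum fun i _ ↦ ?_
  simpa using Nat.pow_le_pow_right hq (hs i)

lemma pow_mul_pow_le_rpow_mul_rpow {a b s t : ℝ} {n w : ℕ} (ha : 1 ≤ a) (hb : 1 ≤ b)
    (hn : (n : ℝ) ≤ s) (hw : (w : ℝ) ≤ t) : a ^ n * b ^ w ≤ a ^ s * b ^ t := by
  rw [← Real.rpow_natCast, ← Real.rpow_natCast]
  gcongr

lemma card_union_le_of_card_le_div {α : Type*} [DecidableEq α] {W B : Finset α} {L : ℕ}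
    {δ x : ℝ} (hδ : 0 < δ) (hB : (#B : ℝ) ≤ #W / (2 * δ) + L) (hW : (#W : ℝ) ≤ x) :
    #(W ∪ B) ≤ L + ⌊(1 + 1 / (2 * δ)) * x⌋₊ := by
  have hx : 0 ≤ x := (Nat.cast_nonneg _).trans hW
  rw [add_comm, ← Nat.floor_add_natCast (by positivity)]
  refine Nat.le_floor ?_
  calc (#(W ∪ B) : ℝ) ≤ #W + #B := by exact_mod_cast card_union_le W B
    _ ≤ (1 + 1 / (2 * δ)) * #W + L := by rw [add_mul, one_mul, one_div_mul_eq_div]; linarith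
    _ ≤ (1 + 1 / (2 * δ)) * x + L := by gcongr

theorem stmt_8_general {V : Type*} [Fintype V] [DecidableEq V]
    (G : SimpleGraph V) [DecidableRel G.Adj]
    (L : ℕ) (hdeg : ∀ v : V, (G.neighborFinset v).card = 6)
    (v₀ : V) (δ : ℝ) (hδ : 0 < δ)
    (q : ℕ) (hq : 1 ≤ q) (Amin : ℝ) (hAmin : 0 < Amin) (K : ℕ) :
    (Nat.card (Σ W : {W : Finset V //
        (∃ B : Finset V, (G.induce (((W : Finset V) ∪ B : Finset V) : Set V)).Connected ∧
          (B.card : ℝ) ≤ ((W : Finset V).card : ℝ) / (2 * δ) + L ∧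
          v₀ ∈ (W : Finset V) ∪ B) ∧
        (((W : Finset V).card : ℝ) ≤ 2 / Amin * K)},
      ({v : V // v ∈ (W : Finset V)} → Fin q)) : ℝ) ≤
      (72 : ℝ) ^ ((1 + 1 / (2 * δ)) * L) *
        ((72 : ℝ) ^ (1 + 1 / (2 * δ)) * q) ^ (2 / Amin * K) := by
  set c : ℝ := 1 + 1 / (2 * δ)
  set x : ℝ := 2 / Amin * K
  have hc : 1 ≤ c := le_add_of_nonneg_right (by positivity)
  have hx : 0 ≤ x := by positivity
  have hreg : G.IsRegularOfDegree 6 := fun v ↦ (G.card_neighborFinset_eq_degree v) ▸ hdeg v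
  calc _ ≤ ((72 ^ (L + ⌊c * x⌋₊) * q ^ ⌊x⌋₊ : ℕ) : ℝ) := by
        refine Nat.cast_le.mpr ((card_sigma_fun_fin_le Subtype.val hq
          fun W ↦ Nat.le_floor W.2.2).trans (Nat.mul_le_mul_right _ ?_))
        refine (SimpleGraph.card_le_of_forall_subset_connected hreg (by norm_num) v₀
          (n := L + ⌊c * x⌋₊) ?_).trans_eq (by norm_num)
        rintro W ⟨⟨B, hconn, hB, hv₀⟩, hW⟩
        exact ⟨W ∪ B, subset_union_left, hv₀, hconn, card_union_le_of_card_le_div hδ hB hW⟩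
    _ ≤ (72 : ℝ) ^ (c * L + c * x) * (q : ℝ) ^ x := by
        push_cast
        refine pow_mul_pow_le_rpow_mul_rpow (by norm_num) (by exact_mod_cast hq) ?_
          (Nat.floor_le hx)
        push_cast
        exact add_le_add (le_mul_of_one_le_left L.cast_nonneg hc)
          (Nat.floor_le (mul_nonneg (zero_le_one.trans hc) hx))
    _ = _ := by
        rw [Real.mul_rpow (by positivity) (by positivity), ← Real.rpow_mul (by norm_num),
          Real.rpow_add (by norm_num), mul_assoc]

/-- Counting bridged contour supports together with colorings: the number of pairs
`(W, ω)` with `W` bridgeable to a connected set through `v₀`, `|W| ≤ (2/A_min) K`,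
and `ω : W → [q]`, is at most `72^{(1+1/(2δ))L} (72^{1+1/(2δ)} q)^{(2/A_min) K}`. -/
theorem stmt_8 {V : Type*} [Fintype V] [DecidableEq V]
    (G : SimpleGraph V) [DecidableRel G.Adj]
    (L : ℕ) (hL : 1 ≤ L) (hcard : Fintype.card V = L ^ 2)
    (hdeg : ∀ v : V, (G.neighborFinset v).card = 6)
    (v₀ : V) (δ : ℝ) (hδ : 0 < δ) (hδ1 : δ < 1)
    (q : ℕ) (hq : 1 ≤ q) (Amin : ℝ) (hAmin : 0 < Amin) (K : ℕ) :
    (Nat.card (Σ W : {W : Finset V //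
        (∃ B : Finset V, (G.induce (((W : Finset V) ∪ B : Finset V) : Set V)).Connected ∧
          (B.card : ℝ) ≤ ((W : Finset V).card : ℝ) / (2 * δ) + L ∧
          v₀ ∈ (W : Finset V) ∪ B) ∧
        (((W : Finset V).card : ℝ) ≤ 2 / Amin * K)},
      ({v : V // v ∈ (W : Finset V)} → Fin q)) : ℝ) ≤
      (72 : ℝ) ^ ((1 + 1 / (2 * δ)) * L) *
        ((72 : ℝ) ^ (1 + 1 / (2 * δ)) * q) ^ (2 / Amin * K) :=
  stmt_8_general G L hdeg v₀ δ hδ q hq Amin hAmin K
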